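/- arXiv:1809.05251 — 2 statements merged into one kernel-verified Lean document; each statement's English description precedes it below -/
import Mathlib

section
/- Let f = h + ḡ be a sense-preserving harmonic mapping on 𝔻 with h ∈ S^δ[α] (δ ≥ 0, 0 ≤ α < 1), g(z) = Σ_{n≥1} bₙ zⁿ, g' = w·h' where |w| < 1 on 𝔻, and |b₁| = β ∈ [0,1). Then |b₂| ≤ (1-α)β/(2^δ(2-α)) + (1-β²)/2. -/
/-!
Differentiating `g' = w h'` at the origin, where `h'(0) = 1` and `w(0) = g'(0) = b₁`, gives
`b₂ = w'(0) / 2 + b₁ a₂`. The Schwarz–Pick lemma bounds `|w'(0)| ≤ 1 - |w(0)|² = 1 - β²`, and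
the first term of the coefficient condition alone gives `|a₂| ≤ (1 - α) / (2^δ (2 - α))`.
-/

open Complex Metric

open ComplexConjugate FormalMultilinearSeries Set

open scoped NNReal

theorem hasFPowerSeriesOnBall_ofScalars_of_hasSum {𝕜 : Type*} [RCLike 𝕜] {c : ℕ → 𝕜}
    {f : 𝕜 → 𝕜} {r : ℝ≥0} (hr : 0 < r)
    (hf : ∀ z ∈ ball (0 : 𝕜) r, HasSum (fun n ↦ c n * z ^ n) (f z)) :
    HasFPowerSeriesOnBall f (ofScalars 𝕜 c) 0 r where
  r_le := by
    refine ENNReal.le_of_forall_nnreal_lt fun s hs ↦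
      (ofScalars 𝕜 c).le_radius_of_tendsto (l := 0) ?_
    have hs' : ((s : ℝ) : 𝕜) ∈ ball (0 : 𝕜) r := by simpa using hs
    simpa [ofScalars_norm] using (hf _ hs').summable.tendsto_atTop_zero.norm
  r_pos := by exact_mod_cast hr
  hasSum {y} hy := by
    simpa [ofScalars_apply_eq, mul_comm] using hf y (by simpa using hy)

theorem HasFPowerSeriesAt.iteratedDeriv_eq_factorial_mul {𝕜 : Type*}
    [NontriviallyNormedField 𝕜] [CompleteSpace 𝕜] [CharZero 𝕜] {c : ℕ → 𝕜} {f : 𝕜 → 𝕜} {x : 𝕜}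
    (hf : HasFPowerSeriesAt f (ofScalars 𝕜 c) x) (n : ℕ) :
    iteratedDeriv n f x = n.factorial * c n := by
  have := ofScalars_series_injective 𝕜 𝕜
    (hf.eq_formalMultilinearSeries hf.analyticAt.hasFPowerSeriesAt)
  rw [this, mul_div_cancel₀ _ (Nat.cast_ne_zero.2 n.factorial_ne_zero)]

namespace Complex

noncomputable def blaschkeFactor (a : ℂ) (z : ℂ) : ℂ := (z - a) / (1 - conj a * z)

variable {a : ℂ}

theorem one_sub_conj_mul_ne_zero {z : ℂ} (ha : ‖a‖ < 1) (hz : ‖z‖ < 1) :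
    1 - conj a * z ≠ 0 := by
  refine sub_ne_zero.2 fun h ↦ ?_
  have : ‖conj a * z‖ < 1 := by
    rw [norm_mul, RCLike.norm_conj]
    exact mul_lt_one_of_nonneg_of_lt_one_left (norm_nonneg a) ha hz.le
  simp [← h] at this

theorem normSq_one_sub_conj_mul_sub_normSq_sub (a z : ℂ) :
    normSq (1 - conj a * z) - normSq (z - a) = (1 - normSq a) * (1 - normSq z) := by
  simp only [normSq_apply, sub_re, sub_im, mul_re, mul_im, conj_re, conj_im, one_re, one_im]
  ring

theorem norm_blaschkeFactor_lt_one {z : ℂ} (ha : ‖a‖ < 1) (hz : ‖z‖ < 1) :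
    ‖blaschkeFactor a z‖ < 1 := by
  have hpos : 0 < ‖1 - conj a * z‖ := norm_pos_iff.2 (one_sub_conj_mul_ne_zero ha hz)
  rw [blaschkeFactor, norm_div, div_lt_one hpos]
  refine lt_of_pow_lt_pow_left₀ 2 (norm_nonneg _) ?_
  have key := normSq_one_sub_conj_mul_sub_normSq_sub a z
  simp only [normSq_eq_norm_sq] at key
  have hprod : 0 < (1 - ‖a‖ ^ 2) * (1 - ‖z‖ ^ 2) :=
    mul_pos (by nlinarith [norm_nonneg a]) (by nlinarith [norm_nonneg z])
  linarith

theorem hasDerivAt_blaschkeFactor_self (ha : ‖a‖ < 1) :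
    HasDerivAt (blaschkeFactor a) ((1 - ‖a‖ ^ 2 : ℝ) : ℂ)⁻¹ a := by
  have hden := one_sub_conj_mul_ne_zero ha ha
  have h : HasDerivAt (fun z ↦ (z - a) / (1 - conj a * z)) _ a :=
    ((hasDerivAt_id a).sub_const a).div
      (((hasDerivAt_id a).const_mul (conj a)).const_sub 1) hden
  have hnorm : 1 - conj a * a = ((1 - ‖a‖ ^ 2 : ℝ) : ℂ) := by
    rw [mul_comm, mul_conj, normSq_eq_norm_sq]; push_cast; ring
  refine h.congr_deriv ?_
  simp only [id_eq, sub_self, zero_mul, sub_zero, one_mul, hnorm] at hden ⊢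
  field_simp

theorem differentiableOn_blaschkeFactor (ha : ‖a‖ < 1) :
    DifferentiableOn ℂ (blaschkeFactor a) (ball 0 1) := fun _ hz ↦
  ((differentiableAt_id.sub_const a).div ((differentiableAt_id.const_mul _).const_sub 1)
    (one_sub_conj_mul_ne_zero ha (mem_ball_zero_iff.1 hz))).differentiableWithinAt

/-- Schwarz–Pick at the centre: compose `f` with the disc automorphism sending `f c` to `0`. -/
theorem norm_deriv_le_one_sub_sq_div_of_mapsTo_ball {f : ℂ → ℂ} {c : ℂ} {R : ℝ} (hR : 0 < R)
    (hd : DifferentiableOn ℂ f (ball c R)) (h_maps : MapsTo f (ball c R) (ball 0 1)) :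
    ‖deriv f c‖ ≤ (1 - ‖f c‖ ^ 2) / R := by
  have hc : c ∈ ball c R := mem_ball_self hR
  have hfc : ‖f c‖ < 1 := mem_ball_zero_iff.1 (h_maps hc)
  have hcomp_maps : MapsTo (blaschkeFactor (f c) ∘ f) (ball c R) (ball 0 1) :=
    fun _ hz ↦ mem_ball_zero_iff.2 <|
      norm_blaschkeFactor_lt_one hfc (mem_ball_zero_iff.1 (h_maps hz))
  have hcomp_d : DifferentiableOn ℂ (blaschkeFactor (f c) ∘ f) (ball c R) :=
    (differentiableOn_blaschkeFactor hfc).comp hd h_maps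
  have hschwarz := norm_deriv_le_div_of_mapsTo_ball hcomp_d
    (by simpa [blaschkeFactor] using hcomp_maps.mono_right ball_subset_closedBall) hR
  have hchain :
      deriv (blaschkeFactor (f c) ∘ f) c = ((1 - ‖f c‖ ^ 2 : ℝ) : ℂ)⁻¹ * deriv f c :=
    ((hasDerivAt_blaschkeFactor_self hfc).comp c
      (hd.differentiableAt (isOpen_ball.mem_nhds hc)).hasDerivAt).deriv
  have hpos : 0 < 1 - ‖f c‖ ^ 2 := by nlinarith [norm_nonneg (f c)]
  rwa [hchain, norm_mul, norm_inv, norm_real, Real.norm_of_nonneg hpos.le, inv_mul_le_iff₀ hpos,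
    mul_one_div] at hschwarz

end Complex

theorem norm_two_le_of_tsum_weighted_norm_le_one {E : Type*} [SeminormedAddCommGroup E]
    {α δ : ℝ} (hα : α < 1) {a : ℕ → E}
    (hsum : Summable fun n : ℕ ↦
      ((n : ℝ) + 2) ^ δ * (((n : ℝ) + 2 - α) / (1 - α)) * ‖a (n + 2)‖)
    (hle : ∑' n : ℕ, ((n : ℝ) + 2) ^ δ * (((n : ℝ) + 2 - α) / (1 - α)) * ‖a (n + 2)‖ ≤ 1) :
    ‖a 2‖ ≤ (1 - α) / (2 ^ δ * (2 - α)) := by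
  have hterm := (hsum.le_tsum 0 fun n _ ↦ by
    have : α < n + 2 := by linarith [n.cast_nonneg (α := ℝ)]
    exact mul_nonneg (mul_nonneg (by positivity) (div_nonneg (by linarith) (by linarith)))
      (norm_nonneg _)).trans hle
  simp only [Nat.cast_zero, zero_add] at hterm
  have h1α : 0 < 1 - α := by linarith
  have h2α : 0 < 2 - α := by linarith
  rw [le_div_iff₀ (by positivity)]
  rw [mul_div_assoc', div_mul_eq_mul_div, div_le_one h1α] at hterm
  linarith

theorem b2_bound_general
    (α β δ : ℝ) (hα1 : α < 1)
    (h g w : ℂ → ℂ) (a b : ℕ → ℂ)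
    (ha1 : a 1 = 1)
    (hreph : ∀ z ∈ ball (0 : ℂ) 1, HasSum (fun n : ℕ => a n * z ^ n) (h z))
    (hrepg : ∀ z ∈ ball (0 : ℂ) 1, HasSum (fun n : ℕ => b n * z ^ n) (g z))
    (hsb : Summable fun n : ℕ =>
      ((n : ℝ) + 2) ^ δ * (((n : ℝ) + 2 - α) / (1 - α)) * ‖a (n + 2)‖)
    (hcoef : ∑' n : ℕ,
      ((n : ℝ) + 2) ^ δ * (((n : ℝ) + 2 - α) / (1 - α)) * ‖a (n + 2)‖ ≤ 1)
    (hw : DifferentiableOn ℂ w (ball (0 : ℂ) 1))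
    (hwlt : ∀ z ∈ ball (0 : ℂ) 1, ‖w z‖ < 1)
    (hdil : ∀ z ∈ ball (0 : ℂ) 1, deriv g z = w z * deriv h z)
    (hβ : ‖b 1‖ = β) :
    ‖b 2‖ ≤ (1 - α) * β / ((2 : ℝ) ^ δ * (2 - α)) + (1 - β ^ 2) / 2 := by
  have hball : ball (0 : ℂ) 1 ∈ nhds 0 := ball_mem_nhds 0 one_pos
  have hPh := hasFPowerSeriesOnBall_ofScalars_of_hasSum one_pos hreph
  have h_iter := hPh.hasFPowerSeriesAt.iteratedDeriv_eq_factorial_mul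
  have g_iter := (hasFPowerSeriesOnBall_ofScalars_of_hasSum one_pos hrepg).hasFPowerSeriesAt
    |>.iteratedDeriv_eq_factorial_mul
  have h_deriv : deriv h 0 = 1 := by simpa [ha1] using h_iter 1
  have h_deriv2 : deriv (deriv h) 0 = 2 * a 2 := by simpa [iteratedDeriv_succ] using h_iter 2
  have g_deriv : deriv g 0 = b 1 := by simpa using g_iter 1
  have g_deriv2 : deriv (deriv g) 0 = 2 * b 2 := by simpa [iteratedDeriv_succ] using g_iter 2
  have hw0 : w 0 = b 1 := by
    simpa [g_deriv, h_deriv] using (hdil 0 (mem_ball_self one_pos)).symm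
  have hb2 : 2 * b 2 = deriv w 0 + 2 * (b 1 * a 2) := by
    have hprod := deriv_fun_mul (hw.differentiableAt hball)
      hPh.analyticAt.deriv.differentiableAt
    rw [← (Filter.eventuallyEq_of_mem hball hdil).deriv_eq, g_deriv2, h_deriv, h_deriv2, hw0]
      at hprod
    linear_combination hprod
  have hpick : ‖deriv w 0‖ ≤ 1 - β ^ 2 := by
    simpa [hw0, hβ] using norm_deriv_le_one_sub_sq_div_of_mapsTo_ball one_pos hw
      fun z hz ↦ mem_ball_zero_iff.2 (hwlt z hz)
  have ha2 := norm_two_le_of_tsum_weighted_norm_le_one hα1 hsb hcoef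
  calc ‖b 2‖ = ‖deriv w 0 / 2 + b 1 * a 2‖ := by congr 1; linear_combination hb2 / 2
    _ ≤ ‖deriv w 0‖ / 2 + β * ‖a 2‖ := by
        simpa [hβ] using norm_add_le (deriv w 0 / 2) (b 1 * a 2)
    _ ≤ (1 - β ^ 2) / 2 + β * ((1 - α) / (2 ^ δ * (2 - α))) := by
        gcongr; exact hβ ▸ norm_nonneg _
    _ = (1 - α) * β / ((2 : ℝ) ^ δ * (2 - α)) + (1 - β ^ 2) / 2 := by ring

theorem b2_bound
    (α β δ : ℝ) (hα0 : 0 ≤ α) (hα1 : α < 1) (hβ0 : 0 ≤ β) (hβ1 : β < 1)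
    (hδ : 0 ≤ δ)
    (h g w : ℂ → ℂ) (a b : ℕ → ℂ)
    (ha0 : a 0 = 0) (ha1 : a 1 = 1) (hb0 : b 0 = 0)
    (hreph : ∀ z ∈ ball (0 : ℂ) 1, HasSum (fun n : ℕ => a n * z ^ n) (h z))
    (hrepg : ∀ z ∈ ball (0 : ℂ) 1, HasSum (fun n : ℕ => b n * z ^ n) (g z))
    (hsb : Summable fun n : ℕ =>
      ((n : ℝ) + 2) ^ δ * (((n : ℝ) + 2 - α) / (1 - α)) * ‖a (n + 2)‖)
    (hcoef : ∑' n : ℕ,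
      ((n : ℝ) + 2) ^ δ * (((n : ℝ) + 2 - α) / (1 - α)) * ‖a (n + 2)‖ ≤ 1)
    (hw : DifferentiableOn ℂ w (ball (0 : ℂ) 1))
    (hwlt : ∀ z ∈ ball (0 : ℂ) 1, ‖w z‖ < 1)
    (hdil : ∀ z ∈ ball (0 : ℂ) 1, deriv g z = w z * deriv h z)
    (hβ : ‖b 1‖ = β) :
    ‖b 2‖ ≤ (1 - α) * β / ((2 : ℝ) ^ δ * (2 - α)) + (1 - β ^ 2) / 2 :=
  b2_bound_general α β δ hα1 h g w a b ha1 hreph hrepg hsb hcoef hw hwlt hdil hβ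
end

section
/- Let f = h + ḡ ∈ S_H^δ[α, β] with δ ≥ 0. Then for all z with |z| = r < 1, |g(z)| ≤ E/(2^δ(2-α)β³), where E = rβ(2^δ(2-α)β - (1-α)(2-(r+2β)β)) + (2-2α-2^δ(2-α)β)(1-β²)log(1+rβ), assuming β ∈ (0,1). -/
/-!
Since `g' = w h'`, it suffices to bound both factors on the circle `|y| = s`. The Schwarz–Pick lemma
gives `|w y| ≤ (β + s) / (1 + β s)`, and since `n ≤ K n^δ (n - α) / (1 - α)` for `n ≥ 2`, with
`K = 2 (1 - α) / (2^δ (2 - α))`, the coefficient condition gives `|h' y| ≤ 1 + K s`. Integrating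
`|g'|` along the radius `[0, z]` bounds `|g z|` by `∫₀^r (β + s) (1 + K s) / (1 + β s) ds`, which is
the stated closed form.
-/

open Complex ComplexConjugate Metric Set

theorem norm_one_sub_conj_mul_sq_sub_norm_sub_sq (u v : ℂ) :
    ‖1 - conj v * u‖ ^ 2 - ‖u - v‖ ^ 2 = (1 - ‖u‖ ^ 2) * (1 - ‖v‖ ^ 2) := by
  simp only [Complex.sq_norm, Complex.normSq_apply, Complex.sub_re, Complex.sub_im,
    Complex.mul_re, Complex.mul_im, Complex.conj_re, Complex.conj_im, Complex.one_re,
    Complex.one_im]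
  ring

theorem norm_sub_lt_norm_one_sub_conj_mul {u v : ℂ} (hu : ‖u‖ < 1) (hv : ‖v‖ < 1) :
    ‖u - v‖ < ‖1 - conj v * u‖ := by
  have hid := norm_one_sub_conj_mul_sq_sub_norm_sub_sq u v
  have hpos : 0 < (1 - ‖u‖ ^ 2) * (1 - ‖v‖ ^ 2) := by
    apply mul_pos <;> nlinarith [norm_nonneg u, norm_nonneg v]
  exact lt_of_pow_lt_pow_left₀ 2 (norm_nonneg _) (by linarith)

theorem norm_mul_one_add_le_of_norm_sub_le {u v : ℂ} {s : ℝ} (hu : ‖u‖ < 1) (hv : ‖v‖ < 1)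
    (hs : 0 ≤ s) (hs1 : s < 1) (h : ‖u - v‖ ≤ s * ‖1 - conj v * u‖) :
    ‖u‖ * (1 + ‖v‖ * s) ≤ ‖v‖ + s := by
  set t := ‖u‖
  set b := ‖v‖
  set D := ‖1 - conj v * u‖
  have hD : 1 - b * t ≤ D := by
    simpa [D, b, t] using norm_sub_norm_le (1 : ℂ) (conj v * u)
  have hbt : 0 ≤ 1 - b * t := by nlinarith [norm_nonneg u, norm_nonneg v]
  have hid := norm_one_sub_conj_mul_sq_sub_norm_sub_sq u v
  have hsq : ‖u - v‖ ^ 2 ≤ s ^ 2 * D ^ 2 := by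
    rw [← mul_pow]; exact pow_le_pow_left₀ (norm_nonneg _) h 2
  -- `(1 - s²) D² ≤ D² - ‖u - v‖² = (1 - t²)(1 - b²) = (1 - bt)² - (t - b)²` and `1 - bt ≤ D`
  have key : (t - b) ^ 2 ≤ (s * (1 - b * t)) ^ 2 := by
    have : (1 - s ^ 2) * (1 - b * t) ^ 2 ≤ (1 - s ^ 2) * D ^ 2 :=
      mul_le_mul_of_nonneg_left (pow_le_pow_left₀ hbt hD 2) (by nlinarith)
    nlinarith
  have := (sq_le_sq.mp key).trans_eq (abs_of_nonneg (mul_nonneg hs hbt))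
  nlinarith [le_abs_self (t - b)]

theorem norm_le_div_of_mapsTo_ball {w : ℂ → ℂ} (hw : DifferentiableOn ℂ w (ball 0 1))
    (hmaps : MapsTo w (ball 0 1) (ball 0 1)) {z : ℂ} (hz : z ∈ ball (0 : ℂ) 1) :
    ‖w z‖ ≤ (‖w 0‖ + ‖z‖) / (1 + ‖w 0‖ * ‖z‖) := by
  have hnorm : ∀ ζ ∈ ball (0 : ℂ) 1, ‖w ζ‖ < 1 := fun ζ hζ => mem_ball_zero_iff.mp (hmaps hζ)
  have hv := hnorm 0 (mem_ball_self one_pos)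
  have hlt : ∀ ζ ∈ ball (0 : ℂ) 1, ‖w ζ - w 0‖ < ‖1 - conj (w 0) * w ζ‖ := fun ζ hζ =>
    norm_sub_lt_norm_one_sub_conj_mul (hnorm ζ hζ) hv
  have hden : ∀ ζ ∈ ball (0 : ℂ) 1, 1 - conj (w 0) * w ζ ≠ 0 := fun ζ hζ =>
    norm_pos_iff.mp ((norm_nonneg _).trans_lt (hlt ζ hζ))
  -- compose `w` with the disc automorphism sending `w 0` to `0` and apply the Schwarz lemma
  set φ : ℂ → ℂ := fun ζ => (w ζ - w 0) / (1 - conj (w 0) * w ζ)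
  have hφ : DifferentiableOn ℂ φ (ball 0 1) :=
    (hw.sub_const _).div ((differentiableOn_const _).sub ((differentiableOn_const _).mul hw)) hden
  have hφmaps : MapsTo φ (ball 0 1) (closedBall 0 1) := fun ζ hζ => by
    rw [mem_closedBall_zero_iff, norm_div, div_le_one (norm_pos_iff.mpr (hden ζ hζ))]
    exact (hlt ζ hζ).le
  have hschwarz : ‖φ z‖ ≤ ‖z‖ := by
    simpa using Complex.norm_le_norm_of_mapsTo_ball hφ hφmaps (by simp [φ])
      (mem_ball_zero_iff.mp hz)
  rw [norm_div, div_le_iff₀ (norm_pos_iff.mpr (hden z hz))] at hschwarz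
  rw [le_div_iff₀ (by positivity)]
  exact norm_mul_one_add_le_of_norm_sub_le (hnorm z hz) hv (norm_nonneg z)
    (mem_ball_zero_iff.mp hz) hschwarz

theorem hasSum_deriv_of_hasSum_pow {h : ℂ → ℂ} {a : ℕ → ℂ}
    (hreph : ∀ z ∈ ball (0 : ℂ) 1, HasSum (fun n => a n * z ^ n) (h z))
    (hs : Summable fun n : ℕ => (n : ℝ) * ‖a n‖) {z : ℂ} (hz : z ∈ ball (0 : ℂ) 1) :
    HasSum (fun n : ℕ => a n * (n * z ^ (n - 1))) (deriv h z) := by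
  have hterm : ∀ (n : ℕ) (y : ℂ), y ∈ ball (0 : ℂ) 1 →
      ‖a n * (n * y ^ (n - 1))‖ ≤ n * ‖a n‖ := by
    intro n y hy
    rw [norm_mul, norm_mul, norm_pow, Complex.norm_natCast, mul_comm]
    gcongr
    exact mul_le_of_le_one_right n.cast_nonneg
      (pow_le_one₀ (norm_nonneg y) (mem_ball_zero_iff.mp hy).le)
  have hderiv := hasDerivAt_tsum_of_isPreconnected hs isOpen_ball
    (convex_ball (0 : ℂ) 1).isPreconnected (fun n y _ => (hasDerivAt_pow n y).const_mul (a n))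
    hterm (mem_ball_self one_pos) (hreph 0 (mem_ball_self one_pos)).summable hz
  have hh : h =ᶠ[nhds z] fun y => ∑' n, a n * y ^ n :=
    Filter.eventually_of_mem (isOpen_ball.mem_nhds hz) fun y hy => (hreph y hy).tsum_eq.symm
  rw [hh.deriv_eq, hderiv.deriv]
  exact (Summable.of_norm_bounded hs fun n => hterm n z hz).hasSum

theorem norm_deriv_le_of_hasSum_pow {h : ℂ → ℂ} {a : ℕ → ℂ}
    (hreph : ∀ z ∈ ball (0 : ℂ) 1, HasSum (fun n => a n * z ^ n) (h z))
    (hs : Summable fun n : ℕ => ((n : ℝ) + 2) * ‖a (n + 2)‖) {z : ℂ} (hz : z ∈ ball (0 : ℂ) 1) :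
    ‖deriv h z‖ ≤ ‖a 1‖ + ‖z‖ * ∑' n : ℕ, ((n : ℝ) + 2) * ‖a (n + 2)‖ := by
  have hs' : Summable fun n : ℕ => (n : ℝ) * ‖a n‖ :=
    (summable_nat_add_iff 2).mp (by simpa [add_assoc, one_add_one_eq_two] using hs)
  have htail := (hasSum_nat_add_iff' 2).mpr (hasSum_deriv_of_hasSum_pow hreph hs' hz)
  simp only [Finset.sum_range_succ, Finset.sum_range_zero] at htail
  have hbound : ∀ n : ℕ, ‖a (n + 2) * ((n + 2 : ℕ) * z ^ (n + 2 - 1))‖ ≤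
      ‖z‖ * (((n : ℝ) + 2) * ‖a (n + 2)‖) := by
    intro n
    have hzn : ‖z‖ ^ n ≤ 1 := pow_le_one₀ (norm_nonneg z) (mem_ball_zero_iff.mp hz).le
    rw [norm_mul, norm_mul, norm_pow, Complex.norm_natCast, show n + 2 - 1 = n + 1 from rfl,
      pow_succ]
    push_cast
    calc ‖a (n + 2)‖ * ((n + 2) * (‖z‖ ^ n * ‖z‖))
        = ‖z‖ ^ n * (‖z‖ * ((n + 2) * ‖a (n + 2)‖)) := by ring
      _ ≤ ‖z‖ * ((n + 2) * ‖a (n + 2)‖) := by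
        apply mul_le_of_le_one_left (by positivity) hzn
  have htail_le := htail.norm_le_of_bounded (hs.hasSum.mul_left ‖z‖) hbound
  simp only [CharP.cast_eq_zero, zero_mul, mul_zero, zero_add, Nat.cast_one,
    Nat.sub_self, pow_zero, mul_one] at htail_le
  linarith [norm_sub_norm_le (deriv h z) (a 1)]

theorem mul_two_rpow_mul_le {α δ m : ℝ} (hα : 0 ≤ α) (hαm : α ≤ m) (hm : 2 ≤ m) (hδ : 0 ≤ δ) :
    m * ((2 : ℝ) ^ δ * (2 - α)) ≤ 2 * (m ^ δ * (m - α)) :=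
  calc m * ((2 : ℝ) ^ δ * (2 - α)) = (2 : ℝ) ^ δ * (m * (2 - α)) := by ring
    _ ≤ (2 : ℝ) ^ δ * (2 * (m - α)) := mul_le_mul_of_nonneg_left (by nlinarith) (by positivity)
    _ ≤ m ^ δ * (2 * (m - α)) := by gcongr
    _ = 2 * (m ^ δ * (m - α)) := by ring

theorem norm_deriv_le_one_add_of_tsum_coeff_le {α δ : ℝ} {h : ℂ → ℂ} {a : ℕ → ℂ}
    (hα0 : 0 ≤ α) (hα1 : α < 1) (hδ : 0 ≤ δ) (ha1 : a 1 = 1)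
    (hreph : ∀ z ∈ ball (0 : ℂ) 1, HasSum (fun n : ℕ => a n * z ^ n) (h z))
    (hsb : Summable fun n : ℕ =>
      ((n : ℝ) + 2) ^ δ * (((n : ℝ) + 2 - α) / (1 - α)) * ‖a (n + 2)‖)
    (hcoef : ∑' n : ℕ,
      ((n : ℝ) + 2) ^ δ * (((n : ℝ) + 2 - α) / (1 - α)) * ‖a (n + 2)‖ ≤ 1)
    {z : ℂ} (hz : z ∈ ball (0 : ℂ) 1) :
    ‖deriv h z‖ ≤ 1 + 2 * (1 - α) / (2 ^ δ * (2 - α)) * ‖z‖ := by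
  set K := 2 * (1 - α) / (2 ^ δ * (2 - α))
  have hA : 0 < (2 : ℝ) ^ δ * (2 - α) := by positivity [show 0 < 2 - α by linarith]
  have hK : 0 ≤ K := div_nonneg (by linarith) hA.le
  have hcomp : ∀ n : ℕ, ((n : ℝ) + 2) * ‖a (n + 2)‖ ≤
      K * (((n : ℝ) + 2) ^ δ * (((n : ℝ) + 2 - α) / (1 - α)) * ‖a (n + 2)‖) := by
    intro n
    have hm : (2 : ℝ) ≤ n + 2 := by linarith [n.cast_nonneg (α := ℝ)]
    have hweight : (n : ℝ) + 2 ≤ K * (((n : ℝ) + 2) ^ δ * (((n : ℝ) + 2 - α) / (1 - α))) := by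
      rw [show K * (((n : ℝ) + 2) ^ δ * (((n : ℝ) + 2 - α) / (1 - α))) =
          2 * (((n : ℝ) + 2) ^ δ * ((n : ℝ) + 2 - α)) / (2 ^ δ * (2 - α)) by
        simp only [K]; field_simp [show (1 - α) ≠ 0 by linarith], le_div_iff₀ hA]
      exact mul_two_rpow_mul_le hα0 (by linarith) hm hδ
    simpa [mul_assoc] using mul_le_mul_of_nonneg_right hweight (norm_nonneg (a (n + 2)))
  have hs : Summable fun n : ℕ => ((n : ℝ) + 2) * ‖a (n + 2)‖ :=
    (hsb.mul_left K).of_nonneg_of_le (fun n => by positivity) hcomp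
  have hsum : ∑' n : ℕ, ((n : ℝ) + 2) * ‖a (n + 2)‖ ≤ K :=
    calc ∑' n : ℕ, ((n : ℝ) + 2) * ‖a (n + 2)‖
        ≤ ∑' n : ℕ, K * (((n : ℝ) + 2) ^ δ * (((n : ℝ) + 2 - α) / (1 - α)) * ‖a (n + 2)‖) :=
          hs.tsum_le_tsum hcomp (hsb.mul_left K)
      _ ≤ K := by rw [tsum_mul_left]; exact mul_le_of_le_one_right hK hcoef
  calc ‖deriv h z‖ ≤ ‖a 1‖ + ‖z‖ * ∑' n : ℕ, ((n : ℝ) + 2) * ‖a (n + 2)‖ :=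
        norm_deriv_le_of_hasSum_pow hreph hs hz
    _ ≤ 1 + K * ‖z‖ := by
        rw [ha1, norm_one, mul_comm K]; gcongr

noncomputable def growthMajorant (α β A r : ℝ) : ℝ :=
  (r * β * (A * β - (1 - α) * (2 - (r + 2 * β) * β)) +
    (2 - 2 * α - A * β) * (1 - β ^ 2) * Real.log (1 + r * β)) / (A * β ^ 3)

theorem growthMajorant_zero (α β A : ℝ) : growthMajorant α β A 0 = 0 := by
  simp [growthMajorant]

theorem hasDerivAt_growthMajorant {α β A s : ℝ} (hA : A ≠ 0) (hβ : β ≠ 0) (hs : 0 < 1 + s * β) :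
    HasDerivAt (growthMajorant α β A) ((β + s) * (1 + 2 * (1 - α) / A * s) / (1 + β * s)) s := by
  have hpoly : HasDerivAt (fun s : ℝ => s * β * (A * β - (1 - α) * (2 - (s + 2 * β) * β)))
      (β * (A * β - (1 - α) * (2 - (s + 2 * β) * β)) + s * β * ((1 - α) * β)) s :=
    (((hasDerivAt_id' s).mul_const β).mul ((((hasDerivAt_id' s).add_const (2 * β)).mul_const
      β).const_sub 2 |>.const_mul (1 - α) |>.const_sub (A * β))).congr_deriv (by ring)
  have hlog : HasDerivAt (fun s : ℝ => Real.log (1 + s * β)) (β / (1 + s * β)) s :=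
    (((hasDerivAt_id' s).mul_const β).const_add 1).log hs.ne' |>.congr_deriv (by ring)
  refine (hpoly.add (hlog.const_mul ((2 - 2 * α - A * β) * (1 - β ^ 2)))).div_const
    (A * β ^ 3) |>.congr_deriv ?_
  have hs' : 1 + β * s ≠ 0 := by linarith
  field_simp
  ring

theorem norm_le_of_norm_deriv_le {g : ℂ → ℂ} {G F : ℝ → ℝ} (hg : DifferentiableOn ℂ g (ball 0 1))
    (hg0 : g 0 = 0) (hG0 : G 0 = 0) (hG : ∀ s ∈ Ico (0 : ℝ) 1, HasDerivAt G (F s) s)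
    (hF : ∀ y ∈ ball (0 : ℂ) 1, ‖deriv g y‖ ≤ F ‖y‖) {z : ℂ} (hz : z ∈ ball (0 : ℂ) 1) :
    ‖g z‖ ≤ G ‖z‖ := by
  have hr : ‖z‖ < 1 := mem_ball_zero_iff.mp hz
  have hnorm : ∀ t ∈ Icc (0 : ℝ) 1, ‖(t : ℂ) * z‖ = t * ‖z‖ := fun t ht => by
    rw [norm_mul, Complex.norm_real, Real.norm_of_nonneg ht.1]
  have hmem : ∀ t ∈ Icc (0 : ℝ) 1, t * ‖z‖ ∈ Ico (0 : ℝ) 1 := fun t ht =>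
    ⟨mul_nonneg ht.1 (norm_nonneg z), (mul_le_of_le_one_left (norm_nonneg z) ht.2).trans_lt hr⟩
  have hball : ∀ t ∈ Icc (0 : ℝ) 1, (t : ℂ) * z ∈ ball (0 : ℂ) 1 := fun t ht => by
    rw [mem_ball_zero_iff, hnorm t ht]; exact (hmem t ht).2
  have hgt : ∀ t ∈ Icc (0 : ℝ) 1,
      HasDerivAt (fun t : ℝ => g (t * z)) (deriv g (t * z) * z) t := fun t ht => by
    have hgd := (hg.differentiableAt (isOpen_ball.mem_nhds (hball t ht))).hasDerivAt
    simpa using (hgd.comp (t : ℂ) ((hasDerivAt_id (t : ℂ)).mul_const z)).comp_ofReal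
  have hGt : ∀ t ∈ Icc (0 : ℝ) 1,
      HasDerivAt (fun t : ℝ => G (t * ‖z‖)) (F (t * ‖z‖) * ‖z‖) t := fun t ht => by
    simpa [Function.comp_def] using (hG _ (hmem t ht)).comp t ((hasDerivAt_id t).mul_const ‖z‖)
  have hfence := image_norm_le_of_norm_deriv_right_le_deriv_boundary'
    (fun t ht => (hgt t ht).continuousAt.continuousWithinAt)
    (fun t ht => (hgt t (Ico_subset_Icc_self ht)).hasDerivWithinAt)
    (by simp [hg0, hG0]) (fun t ht => (hGt t ht).continuousAt.continuousWithinAt)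
    (fun t ht => (hGt t (Ico_subset_Icc_self ht)).hasDerivWithinAt)
    (fun t ht => by
      have ht' := Ico_subset_Icc_self ht
      rw [norm_mul, ← hnorm t ht']
      exact mul_le_mul_of_nonneg_right (hF _ (hball t ht')) (norm_nonneg z))
    (right_mem_Icc.mpr zero_le_one)
  simpa using hfence

theorem g_growth_upper_general
    (α β δ : ℝ) (hα0 : 0 ≤ α) (hα1 : α < 1) (hβ0 : 0 < β)
    (hδ : 0 ≤ δ)
    (h g w : ℂ → ℂ) (a : ℕ → ℂ)
    (ha1 : a 1 = 1)
    (hreph : ∀ z ∈ ball (0 : ℂ) 1, HasSum (fun n : ℕ => a n * z ^ n) (h z))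
    (hsb : Summable fun n : ℕ =>
      ((n : ℝ) + 2) ^ δ * (((n : ℝ) + 2 - α) / (1 - α)) * ‖a (n + 2)‖)
    (hcoef : ∑' n : ℕ,
      ((n : ℝ) + 2) ^ δ * (((n : ℝ) + 2 - α) / (1 - α)) * ‖a (n + 2)‖ ≤ 1)
    (hg : DifferentiableOn ℂ g (ball (0 : ℂ) 1)) (hg0 : g 0 = 0)
    (hw : DifferentiableOn ℂ w (ball (0 : ℂ) 1))
    (hwlt : ∀ z ∈ ball (0 : ℂ) 1, ‖w z‖ < 1)
    (hw0 : ‖w 0‖ = β)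
    (hdil : ∀ z ∈ ball (0 : ℂ) 1, deriv g z = w z * deriv h z) :
    ∀ z ∈ ball (0 : ℂ) 1,
      ‖g z‖ ≤
        (‖z‖ * β * ((2 : ℝ) ^ δ * (2 - α) * β -
            (1 - α) * (2 - (‖z‖ + 2 * β) * β)) +
          (2 - 2 * α - (2 : ℝ) ^ δ * (2 - α) * β) * (1 - β ^ 2) *
            Real.log (1 + ‖z‖ * β)) /
        ((2 : ℝ) ^ δ * (2 - α) * β ^ 3) := by
  intro z hz
  set A : ℝ := 2 ^ δ * (2 - α)
  have hA : 0 < A := by positivity [show 0 < 2 - α by linarith]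
  have hh' : ∀ y ∈ ball (0 : ℂ) 1, ‖deriv h y‖ ≤ 1 + 2 * (1 - α) / A * ‖y‖ := fun y hy =>
    norm_deriv_le_one_add_of_tsum_coeff_le hα0 hα1 hδ ha1 hreph hsb hcoef hy
  have hw' : ∀ y ∈ ball (0 : ℂ) 1, ‖w y‖ ≤ (β + ‖y‖) / (1 + β * ‖y‖) := fun y hy =>
    hw0 ▸ norm_le_div_of_mapsTo_ball hw (fun y hy => mem_ball_zero_iff.mpr (hwlt y hy)) hy
  refine norm_le_of_norm_deriv_le (G := growthMajorant α β A) hg hg0 (growthMajorant_zero α β A)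
    (fun s hs => hasDerivAt_growthMajorant hA.ne' hβ0.ne' (by nlinarith [hs.1])) (fun y hy => ?_) hz
  rw [hdil y hy, norm_mul, mul_div_right_comm]
  exact mul_le_mul (hw' y hy) (hh' y hy) (norm_nonneg _) (by positivity)

theorem g_growth_upper
    (α β δ : ℝ) (hα0 : 0 ≤ α) (hα1 : α < 1) (hβ0 : 0 < β) (hβ1 : β < 1)
    (hδ : 0 ≤ δ)
    (h g w : ℂ → ℂ) (a : ℕ → ℂ)
    (ha0 : a 0 = 0) (ha1 : a 1 = 1)
    (hreph : ∀ z ∈ ball (0 : ℂ) 1, HasSum (fun n : ℕ => a n * z ^ n) (h z))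
    (hsb : Summable fun n : ℕ =>
      ((n : ℝ) + 2) ^ δ * (((n : ℝ) + 2 - α) / (1 - α)) * ‖a (n + 2)‖)
    (hcoef : ∑' n : ℕ,
      ((n : ℝ) + 2) ^ δ * (((n : ℝ) + 2 - α) / (1 - α)) * ‖a (n + 2)‖ ≤ 1)
    (hg : DifferentiableOn ℂ g (ball (0 : ℂ) 1)) (hg0 : g 0 = 0)
    (hw : DifferentiableOn ℂ w (ball (0 : ℂ) 1))
    (hwlt : ∀ z ∈ ball (0 : ℂ) 1, ‖w z‖ < 1)
    (hw0 : ‖w 0‖ = β)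
    (hdil : ∀ z ∈ ball (0 : ℂ) 1, deriv g z = w z * deriv h z) :
    ∀ z ∈ ball (0 : ℂ) 1,
      ‖g z‖ ≤
        (‖z‖ * β * ((2 : ℝ) ^ δ * (2 - α) * β -
            (1 - α) * (2 - (‖z‖ + 2 * β) * β)) +
          (2 - 2 * α - (2 : ℝ) ^ δ * (2 - α) * β) * (1 - β ^ 2) *
            Real.log (1 + ‖z‖ * β)) /
        ((2 : ℝ) ^ δ * (2 - α) * β ^ 3) :=
  g_growth_upper_general α β δ hα0 hα1 hβ0 hδ h g w a ha1 hreph hsb hcoef hg hg0 hw hwlt hw0 hdil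
end
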